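/- arXiv:0904.0227 — 6 statements merged into one kernel-verified Lean document; each statement's English description precedes it below -/
import Mathlib

section
/- Let A be a commutative ring and B an A-algebra that is of finite type over A and integral over A. Then there exists an A-algebra C that is finite (module-finite) over A and of finite presentation as an A-algebra, together with a surjective A-algebra homomorphism C → B. -/
universe u v

/-- A cover of the `A`-algebra `B` by an `A`-algebra `C` which is finite as an `A`-module
and of finite presentation as an `A`-algebra. -/
structure FiniteFinitelyPresentedCover (A : Type u) [CommRing A]
    (B : Type v) [CommRing B] [Algebra A B] where
  /-- the covering algebra -/
  C : Type (max u v)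
  [ring : CommRing C]
  [alg : Algebra A C]
  /-- `C` is finite as an `A`-module -/
  finite : Module.Finite A C
  /-- `C` is of finite presentation as an `A`-algebra -/
  fp : Algebra.FinitePresentation A C
  /-- the surjection onto `B` -/
  π : C →ₐ[A] B
  surjective : Function.Surjective π

attribute [instance] FiniteFinitelyPresentedCover.ring FiniteFinitelyPresentedCover.alg

/-- If `B` is an `A`-algebra of finite type which is integral over `A`, then
there is an `A`-algebra `C` that is finite over `A` and of finite presentation as an
`A`-algebra together with a surjective `A`-algebra homomorphism `C → B`. -/
theorem exists_finite_finitely_presented_cover_of_finiteType_of_isIntegral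
    (A : Type u) [CommRing A] (B : Type v) [CommRing B] [Algebra A B]
    (hft : Algebra.FiniteType A B) (hint : Algebra.IsIntegral A B) :
    Nonempty (FiniteFinitelyPresentedCover A B) := by
  obtain ⟨s, hs⟩ := hft.1
  -- the evaluation map from the polynomial ring on variables indexed by `s`
  let f : MvPolynomial (↥(s : Set B)) A →ₐ[A] B :=
    MvPolynomial.aeval Subtype.val
  have hfsurj : Function.Surjective f := by
    rw [← AlgHom.range_eq_top, ← Algebra.adjoin_range_eq_range_aeval,
      Subtype.range_coe]
    exact hs
  -- choose monic polynomials killing the generators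
  have hmono : ∀ i : ↥(s : Set B), ∃ p : Polynomial A,
      p.Monic ∧ Polynomial.aeval (i : B) p = 0 := fun i => hint.isIntegral i
  choose p hpmonic hpzero using hmono
  let q : ↥(s : Set B) → MvPolynomial (↥(s : Set B)) A :=
    fun i => Polynomial.aeval (MvPolynomial.X i) (p i)
  let I : Ideal (MvPolynomial (↥(s : Set B)) A) := Ideal.span (Set.range q)
  have hIfg : I.FG := ⟨(Set.finite_range q).toFinset, by
    simp [I, Set.Finite.coe_toFinset]⟩
  have hfI : ∀ x ∈ I, f x = 0 := by
    intro x hx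
    refine Submodule.span_induction ?_ ?_ ?_ ?_ hx
    · rintro _ ⟨i, rfl⟩
      have h1 : f (q i) = Polynomial.aeval (f (MvPolynomial.X i)) (p i) :=
        (Polynomial.aeval_algHom_apply f (MvPolynomial.X i) (p i)).symm
      rw [h1]
      have h2 : f (MvPolynomial.X i) = (i : B) := MvPolynomial.aeval_X _ i
      rw [h2, hpzero]
    · simp
    · intro a b _ _ ha hb; rw [map_add, ha, hb, add_zero]
    · intro a b _ hb; rw [smul_eq_mul, map_mul, hb, mul_zero]
  let π : (MvPolynomial (↥(s : Set B)) A ⧸ I) →ₐ[A] B := Ideal.Quotient.liftₐ I f hfI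
  have hπsurj : Function.Surjective π := by
    intro b
    obtain ⟨x, hx⟩ := hfsurj b
    exact ⟨Ideal.Quotient.mk I x, hx⟩
  -- finiteness: the quotient is generated by integral elements
  have hadj : Algebra.adjoin A
      (Set.range fun i : ↥(s : Set B) => Ideal.Quotient.mk I (MvPolynomial.X i)) = ⊤ := by
    have h1 := AlgHom.map_adjoin (Ideal.Quotient.mkₐ A I)
      (Set.range (MvPolynomial.X : ↥(s : Set B) → MvPolynomial (↥(s : Set B)) A))
    rw [MvPolynomial.adjoin_range_X, Algebra.map_top,
      (AlgHom.range_eq_top _).mpr (Ideal.Quotient.mkₐ_surjective A I),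
      ← Set.range_comp] at h1
    exact h1.symm
  have hint' : ∀ x ∈
      (Set.range fun i : ↥(s : Set B) => Ideal.Quotient.mk I (MvPolynomial.X i)),
      IsIntegral A x := by
    rintro _ ⟨i, rfl⟩
    refine ⟨p i, hpmonic i, ?_⟩
    have : Polynomial.aeval (Ideal.Quotient.mk I (MvPolynomial.X i)) (p i)
        = Ideal.Quotient.mk I (q i) := by
      simp [q, Polynomial.aeval_def, Polynomial.hom_eval₂]
      rfl
    rw [show Polynomial.eval₂ (algebraMap A _) (Ideal.Quotient.mk I (MvPolynomial.X i)) (p i)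
        = Polynomial.aeval (Ideal.Quotient.mk I (MvPolynomial.X i)) (p i) from rfl, this]
    exact Ideal.Quotient.eq_zero_iff_mem.mpr (Ideal.subset_span ⟨i, rfl⟩)
  have hfin : Module.Finite A (MvPolynomial (↥(s : Set B)) A ⧸ I) := by
    constructor
    rw [← Algebra.top_toSubmodule, ← hadj]
    exact fg_adjoin_of_finite (Set.finite_range _) hint'
  have hfp : Algebra.FinitePresentation A (MvPolynomial (↥(s : Set B)) A ⧸ I) := by
    have : Finite (↥(s : Set B)) := s.finite_toSet
    exact Algebra.FinitePresentation.quotient hIfg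
  exact ⟨⟨MvPolynomial (↥(s : Set B)) A ⧸ I, hfin, hfp, π, hπsurj⟩⟩
end

section
/- Let A be a commutative ring, S ⊆ A a multiplicative subset, M an A-module, G a finitely presented S⁻¹A-module and u : G → S⁻¹M an S⁻¹A-linear map. Then there exists a finitely presented A-module H, an A-linear map v : H → M, and an isomorphism θ : S⁻¹H → G of S⁻¹A-modules such that the localization S⁻¹v : S⁻¹H → S⁻¹M equals u ∘ θ. -/
universe u v w

/-- Data witnessing that the map `u : G → S⁻¹M` from a finitely presented `S⁻¹A`-module `G`
descends to a map of `A`-modules `v : H → M` with `H` finitely presented: an isomorphism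
`θ : S⁻¹H ≃ G` such that `S⁻¹v = u ∘ θ` (expressed on the generators `h/1` of `S⁻¹H`). -/
structure FinitelyPresentedDescent (A : Type u) [CommRing A] (S : Submonoid A)
    (M : Type v) [AddCommGroup M] [Module A M]
    (G : Type w) [AddCommGroup G] [Module (Localization S) G]
    (u : G →ₗ[Localization S] LocalizedModule S M) where
  /-- the finitely presented `A`-module -/
  H : Type (max u v w)
  [addCommGroup : AddCommGroup H]
  [module : Module A H]
  fp : Module.FinitePresentation A H
  /-- the `A`-linear map to `M` -/
  v : H →ₗ[A] M
  /-- the isomorphism `S⁻¹H ≃ G` -/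
  θ : LocalizedModule S H ≃ₗ[Localization S] G
  /-- `S⁻¹v = u ∘ θ`: both `Localization S`-linear maps agree on the elements `h/1`,
  which generate `S⁻¹H` over `S⁻¹A`. -/
  compat : ∀ h : H, u (θ (LocalizedModule.mkLinearMap S H h))
    = LocalizedModule.mkLinearMap S M (v h)

attribute [instance] FinitelyPresentedDescent.addCommGroup FinitelyPresentedDescent.module

/-!
Write `G ≅ (S⁻¹A)ⁿ ⧸ N` with `N` finitely generated. Clearing the denominators of a finite
generating set of `N` gives a finitely generated `K ⊆ Aⁿ` with `S⁻¹K = N`, so `H = Aⁿ ⧸ K` is a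
finitely presented `A`-module with `S⁻¹H ≅ G`. Because `H` is finitely presented, the composite
`H → G → S⁻¹M` lifts to some `v : H → M` up to a denominator `s ∈ S`; as `s` acts invertibly on
`G`, rescaling the map `H → G` by `s` makes `S⁻¹v = u ∘ θ` hold on the nose.
-/

open scoped Pointwise in
theorem Submodule.exists_fg_localized'_eq {R : Type*} [CommSemiring R] (S : Submonoid R)
    (R' : Type*) [CommSemiring R'] [Algebra R R'] [IsLocalization S R']
    {M M' : Type*} [AddCommMonoid M] [Module R M] [AddCommMonoid M'] [Module R M'] [Module R' M']
    [IsScalarTower R R' M'] (f : M →ₗ[R] M') [IsLocalizedModule S f]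
    {N : Submodule R' M'} (hN : N.FG) :
    ∃ K : Submodule R M, K.FG ∧ K.localized' R' S f = N := by
  classical
  obtain ⟨t, rfl⟩ := hN
  refine ⟨span R (IsLocalizedModule.finsetIntegerMultiple S f t),
    fg_span (Finset.finite_toSet _), ?_⟩
  set c := IsLocalizedModule.commonDenomOfFinset S f t
  have hc : c • (t : Set M') = algebraMap R R' c • (t : Set M') := by
    ext; simp [Set.mem_smul_set, Submonoid.smul_def, algebraMap_smul]
  rw [localized'_span, IsLocalizedModule.finsetIntegerMultiple_image, hc]
  exact span_smul_eq_of_isUnit _ _ (IsLocalization.map_units R' c)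

namespace Module.FinitePresentation

variable {R : Type u} [CommRing R] (S : Submonoid R)

theorem exists_isLocalizedModule (R' : Type*) [CommRing R'] [Algebra R R']
    [IsLocalization S R'] (G : Type*) [AddCommGroup G] [Module R G] [Module R' G]
    [IsScalarTower R R' G] [Module.FinitePresentation R' G] :
    ∃ (H : Type u) (_ : AddCommGroup H) (_ : Module R H) (_ : Module.FinitePresentation R H)
      (g : H →ₗ[R] G), IsLocalizedModule S g := by
  obtain ⟨n, N, e, hN⟩ := exists_fin R' G
  let ι : (Fin n → R) →ₗ[R] Fin n → R' := .pi fun i ↦ Algebra.linearMap R R' ∘ₗ .proj i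
  obtain ⟨K, hK, rfl⟩ := Submodule.exists_fg_localized'_eq S R' ι hN
  exact ⟨_, _, _, finitePresentation_of_surjective K.mkQ K.mkQ_surjective (by simpa using hK),
    (e.symm.restrictScalars R).toLinearMap ∘ₗ K.toLocalizedQuotient' R' S ι, inferInstance⟩

theorem exists_isLocalizedModule_comp_eq {H G M M' : Type*} [AddCommGroup H] [Module R H]
    [Module.FinitePresentation R H] [AddCommGroup G] [Module R G] [AddCommGroup M] [Module R M]
    [AddCommGroup M'] [Module R M'] (g : H →ₗ[R] G) [hg : IsLocalizedModule S g]
    (f : M →ₗ[R] M') [IsLocalizedModule S f] (u : G →ₗ[R] M') :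
    ∃ (g' : H →ₗ[R] G) (v : H →ₗ[R] M), IsLocalizedModule S g' ∧ u ∘ₗ g' = f ∘ₗ v := by
  obtain ⟨v, s, hv⟩ := exists_lift_of_isLocalizedModule S f (u ∘ₗ g)
  refine ⟨algebraMap R (Module.End R G) s ∘ₗ g, v, ?_, ?_⟩
  · exact (IsLocalizedModule.comp_iff_of_bijective_left S _
      ((Module.End.isUnit_iff _).mp (IsLocalizedModule.map_units g s))).mpr hg
  · rw [hv]
    ext x
    simp [Submonoid.smul_def]

end Module.FinitePresentation

/-- Let `A` be a commutative ring, `S ⊆ A` a multiplicative subset, `M` an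
`A`-module, `G` a finitely presented `S⁻¹A`-module and `u : G → S⁻¹M` an `S⁻¹A`-linear map.
Then there exist a finitely presented `A`-module `H`, an `A`-linear map `v : H → M` and an
isomorphism `θ : S⁻¹H ≃ G` with `S⁻¹v = u ∘ θ`. -/
theorem exists_finitelyPresented_descent
    (A : Type u) [CommRing A] (S : Submonoid A)
    (M : Type v) [AddCommGroup M] [Module A M]
    (G : Type w) [AddCommGroup G] [Module (Localization S) G]
    (hG : Module.FinitePresentation (Localization S) G)
    (u : G →ₗ[Localization S] LocalizedModule S M) :
    Nonempty (FinitelyPresentedDescent A S M G u) := by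
  let : Module A G := Module.compHom G (algebraMap A (Localization S))
  have : IsScalarTower A (Localization S) G := IsScalarTower.of_compHom A (Localization S) G
  obtain ⟨H₀, _, _, _, g₀, _⟩ :=
    Module.FinitePresentation.exists_isLocalizedModule S (Localization S) G
  let e : ULift.{max v w} H₀ ≃ₗ[A] H₀ := ULift.moduleEquiv
  have hH : Module.FinitePresentation A (ULift H₀) := .of_equiv e.symm
  obtain ⟨g, v, _, hgv⟩ := Module.FinitePresentation.exists_isLocalizedModule_comp_eq S
    (g₀ ∘ₗ e.toLinearMap) (LocalizedModule.mkLinearMap S M) (u.restrictScalars A)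
  refine ⟨⟨ULift H₀, hH, v,
    (IsLocalizedModule.iso S g).extendScalarsOfIsLocalization S (Localization S), fun h ↦ ?_⟩⟩
  simpa [IsLocalizedModule.iso_mk_one] using LinearMap.congr_fun hgv h
end

section
/- Let A be a commutative ring and let (B_λ) be a filtered direct system of A-algebras with surjective transition maps, where some (equivalently, each) B_λ is a finitely generated A-algebra, and let B = colim B_λ. If the structure map A → B is surjective, then A → B_μ is surjective for all sufficiently large μ. -/
universe u v

/-- A presentation of the commutative `A`-algebra `B` as the colimit of a filtered
direct system of `A`-algebras. -/
structure FilteredAlgebraColimitPresentation (A : Type u) [CommRing A]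
    (B : Type v) [CommRing B] [Algebra A B] where
  /-- the index type of the system -/
  ι : Type (max u v)
  [pre : Preorder ι]
  [dir : IsDirected ι (· ≤ ·)]
  [nonempty : Nonempty ι]
  /-- the terms of the system -/
  C : ι → Type (max u v)
  [ring : ∀ i, CommRing (C i)]
  [alg : ∀ i, Algebra A (C i)]
  /-- the transition maps -/
  t : ∀ i j, i ≤ j → (C i →ₐ[A] C j)
  t_id : ∀ i, t i i le_rfl = AlgHom.id A (C i)
  t_comp : ∀ i j k (hij : i ≤ j) (hjk : j ≤ k),
    (t j k hjk).comp (t i j hij) = t i k (hij.trans hjk)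
  /-- the maps to the colimit -/
  f : ∀ i, C i →ₐ[A] B
  f_comp : ∀ i j (hij : i ≤ j), (f j).comp (t i j hij) = f i
  /-- `B` is the colimit: the maps `f i` are jointly surjective … -/
  jointly_surjective : ∀ b : B, ∃ i c, f i c = b
  /-- … and elements identified in `B` are identified at some finite stage -/
  eventually_eq : ∀ i (x y : C i), f i x = f i y →
    ∃ j, ∃ hij : i ≤ j, t i j hij x = t i j hij y

attribute [instance] FilteredAlgebraColimitPresentation.pre
  FilteredAlgebraColimitPresentation.dir
  FilteredAlgebraColimitPresentation.nonempty
  FilteredAlgebraColimitPresentation.ring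
  FilteredAlgebraColimitPresentation.alg

/-- Let `(B_λ)` be a filtered direct system of `A`-algebras with surjective
transition maps, some term of which is a finitely generated `A`-algebra, and with colimit
`B`.  If the structure map `A → B` is surjective then `A → B_μ` is surjective for all
sufficiently large `μ`. -/
theorem eventually_surjective_of_colimit_surjective
    (A : Type u) [CommRing A] (B : Type v) [CommRing B] [Algebra A B]
    (P : FilteredAlgebraColimitPresentation A B)
    (htrans : ∀ i j (hij : i ≤ j), Function.Surjective (P.t i j hij))
    (hft : ∃ i, Algebra.FiniteType A (P.C i))
    (hB : Function.Surjective (algebraMap A B)) :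
    ∃ μ₀, ∀ μ, ∀ _ : μ₀ ≤ μ, Function.Surjective (algebraMap A (P.C μ)) := by
  classical
  obtain ⟨i, hfti⟩ := hft
  obtain ⟨s, hs⟩ := hfti.1
  -- for each generator, find a stage where it becomes an image from A
  have key : ∀ x : P.C i, ∃ j, ∃ hij : i ≤ j,
      P.t i j hij x ∈ Set.range (algebraMap A (P.C j)) := by
    intro x
    obtain ⟨a, ha⟩ := hB (P.f i x)
    have : P.f i x = P.f i (algebraMap A (P.C i) a) := by
      rw [AlgHom.commutes, ha]
    obtain ⟨j, hij, hj⟩ := P.eventually_eq i _ _ this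
    exact ⟨j, hij, a, by rw [hj, AlgHom.commutes]⟩
  choose j hij hjx using key
  obtain ⟨μ₀, hμ₀⟩ := (insert i (s.image j)).exists_le
  have hiμ₀ : i ≤ μ₀ := hμ₀ i (Finset.mem_insert_self _ _)
  have hsurj0 : Function.Surjective (algebraMap A (P.C μ₀)) := by
    have htop : Algebra.adjoin A ((P.t i μ₀ hiμ₀) '' s) = ⊤ := by
      rw [Algebra.adjoin_image, hs, Algebra.map_top]
      exact (AlgHom.range_eq_top _).2 (htrans i μ₀ hiμ₀)
    have hrange : (P.t i μ₀ hiμ₀) '' s ⊆ Set.range (algebraMap A (P.C μ₀)) := by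
      rintro _ ⟨x, hx, rfl⟩
      have hjμ : j x ≤ μ₀ := hμ₀ (j x)
        (Finset.mem_insert_of_mem (Finset.mem_image_of_mem j hx))
      obtain ⟨a, ha⟩ := hjx x
      refine ⟨a, ?_⟩
      have := congrArg (P.t (j x) μ₀ hjμ) ha
      rw [AlgHom.commutes] at this
      rw [this]
      exact AlgHom.congr_fun (P.t_comp i (j x) μ₀ (hij x) hjμ) x
    intro c
    have hc : c ∈ Algebra.adjoin A ((P.t i μ₀ hiμ₀) '' s) := htop ▸ Algebra.mem_top
    have : Algebra.adjoin A ((P.t i μ₀ hiμ₀) '' s) ≤ ⊥ := by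
      rw [Algebra.adjoin_le_iff]
      intro y hy
      exact Algebra.mem_bot.2 (hrange hy)
    exact Algebra.mem_bot.1 (this hc)
  refine ⟨μ₀, fun μ hμ => ?_⟩
  have : algebraMap A (P.C μ) = (P.t μ₀ μ hμ).toRingHom.comp (algebraMap A (P.C μ₀)) := by
    ext a
    simp
  rw [this]
  exact (htrans μ₀ μ hμ).comp hsurj0
end

section
/- Let A be a commutative ring and let (B_λ) be a filtered direct system of finitely generated A-algebras with surjective transition maps, and let B = colim B_λ. If B is integral over A (equivalently finite over A, since it is of finite type), then B_μ is a finite A-module for all sufficiently large μ. -/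
universe u v

/-- Let `(B_λ)` be a filtered direct system of finitely generated `A`-algebras
with surjective transition maps and colimit `B`.  If `B` is integral over `A` then `B_μ`
is a finite `A`-module for all sufficiently large `μ`. -/
theorem eventually_finite_of_colimit_isIntegral
    (A : Type u) [CommRing A] (B : Type v) [CommRing B] [Algebra A B]
    (P : FilteredAlgebraColimitPresentation A B)
    (htrans : ∀ i j (hij : i ≤ j), Function.Surjective (P.t i j hij))
    (hft : ∀ i, Algebra.FiniteType A (P.C i))
    (hB : Algebra.IsIntegral A B) :
    ∃ μ₀, ∀ μ, ∀ _ : μ₀ ≤ μ, Module.Finite A (P.C μ) := by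
  obtain ⟨μ₀⟩ := P.nonempty
  obtain ⟨s, hs⟩ := (hft μ₀).out
  have key : ∀ x : P.C μ₀, ∃ p : Polynomial A, p.Monic ∧ ∃ j, ∃ h : μ₀ ≤ j,
      Polynomial.aeval (P.t μ₀ j h x) p = 0 := by
    intro x
    obtain ⟨p, hp, hev⟩ := hB.isIntegral (P.f μ₀ x)
    refine ⟨p, hp, ?_⟩
    have heq : P.f μ₀ (Polynomial.aeval x p) = P.f μ₀ 0 := by
      rw [map_zero, ← Polynomial.aeval_algHom_apply, Polynomial.aeval_def]
      exact hev
    obtain ⟨j, hij, hj⟩ := P.eventually_eq μ₀ _ _ heq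
    rw [map_zero, ← Polynomial.aeval_algHom_apply] at hj
    exact ⟨j, hij, hj⟩
  classical
  choose p hmonic j hj hev using key
  obtain ⟨μ₁, hμ₁⟩ := (insert μ₀ (s.image j)).exists_le
  have hμ₀₁ : μ₀ ≤ μ₁ := hμ₁ μ₀ (Finset.mem_insert_self _ _)
  refine ⟨μ₁, fun μ hμ => ?_⟩
  have hμ₀ : μ₀ ≤ μ := hμ₀₁.trans hμ
  have hadj : Algebra.adjoin A ((P.t μ₀ μ hμ₀) '' ↑s) = ⊤ := by
    rw [← AlgHom.map_adjoin, hs, Algebra.map_top]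
    exact (AlgHom.range_eq_top _).mpr (htrans μ₀ μ hμ₀)
  have hint : ∀ y ∈ (P.t μ₀ μ hμ₀) '' ↑s, IsIntegral A y := by
    rintro _ ⟨x, hx, rfl⟩
    refine ⟨p x, hmonic x, ?_⟩
    have hjx : j x ≤ μ :=
      le_trans (hμ₁ (j x) (Finset.mem_insert_of_mem (Finset.mem_image_of_mem j hx))) hμ
    have h2 : P.t (j x) μ hjx (Polynomial.aeval (P.t μ₀ (j x) (hj x) x) (p x)) = 0 := by
      rw [hev x, map_zero]
    rw [← Polynomial.aeval_algHom_apply] at h2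
    have hcomp : P.t (j x) μ hjx (P.t μ₀ (j x) (hj x) x) = P.t μ₀ μ hμ₀ x := by
      have h := P.t_comp μ₀ (j x) μ (hj x) hjx
      exact congrArg (fun g : P.C μ₀ →ₐ[A] P.C μ => g x) h
    rw [hcomp] at h2
    rw [← Polynomial.aeval_def]
    exact h2
  have hfg : (⊤ : Subalgebra A (P.C μ)).toSubmodule.FG := by
    rw [← hadj]
    exact fg_adjoin_of_finite (s.finite_toSet.image _) hint
  rw [Algebra.top_toSubmodule] at hfg
  exact Module.finite_def.mpr hfg
end

section
/- An affine morphism of schemes f : X → Y is universally closed if and only if it is integral. -/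
open AlgebraicGeometry

/-- An affine morphism of schemes is universally closed if and only if it is
integral. -/
theorem isAffineHom_universallyClosed_iff_isIntegralHom
    {X Y : AlgebraicGeometry.Scheme} (f : X ⟶ Y) [IsAffineHom f] :
    UniversallyClosed f ↔ IsIntegralHom f :=
  ⟨fun hf ↦ IsIntegralHom.iff_universallyClosed_and_isAffineHom.mpr ⟨hf, inferInstance⟩,
    fun _ ↦ inferInstance⟩
end

section
/- Let (A_λ) be a filtered direct system of commutative rings with colimit A, and let B be a finitely presented A-algebra. Then there exists an index λ and a finitely presented A_λ-algebra B_λ together with an A-algebra isomorphism A ⊗_{A_λ} B_λ ≅ B. -/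
universe u

open scoped TensorProduct

/-- A presentation of the commutative ring `A` as the colimit of a filtered direct
system of commutative rings. -/
structure FilteredRingColimitPresentation (A : Type u) [CommRing A] where
  /-- the index type of the system -/
  ι : Type u
  [pre : Preorder ι]
  [dir : IsDirected ι (· ≤ ·)]
  [nonempty : Nonempty ι]
  /-- the terms of the system -/
  C : ι → Type u
  [ring : ∀ i, CommRing (C i)]
  /-- the transition maps -/
  t : ∀ i j, i ≤ j → (C i →+* C j)
  t_id : ∀ i, t i i le_rfl = RingHom.id (C i)
  t_comp : ∀ i j k (hij : i ≤ j) (hjk : j ≤ k),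
    (t j k hjk).comp (t i j hij) = t i k (hij.trans hjk)
  /-- the maps to the colimit -/
  f : ∀ i, C i →+* A
  f_comp : ∀ i j (hij : i ≤ j), (f j).comp (t i j hij) = f i
  /-- `A` is the colimit: the maps `f i` are jointly surjective … -/
  jointly_surjective : ∀ a : A, ∃ i c, f i c = a
  /-- … and elements identified in `A` are identified at some finite stage -/
  eventually_eq : ∀ i (x y : C i), f i x = f i y →
    ∃ j, ∃ hij : i ≤ j, t i j hij x = t i j hij y

attribute [instance] FilteredRingColimitPresentation.pre
  FilteredRingColimitPresentation.dir
  FilteredRingColimitPresentation.nonempty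
  FilteredRingColimitPresentation.ring

/-- Data descending a finitely presented `A`-algebra `B` to a finitely presented
algebra over some stage `A_λ` of a filtered system of rings with colimit `A`. -/
structure BaseChangeDescent (A : Type u) [CommRing A]
    (P : FilteredRingColimitPresentation A)
    (B : Type u) [CommRing B] [Algebra A B] where
  /-- the stage -/
  i : P.ι
  /-- the algebra over the stage -/
  B' : Type u
  [ringB' : CommRing B']
  [algB' : Algebra (P.C i) B']
  fp : Algebra.FinitePresentation (P.C i) B'
  [algA : Algebra (P.C i) A]
  /-- the algebra structure on `A` over the stage is via the canonical map `A_λ → A` -/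
  algA_eq : algebraMap (P.C i) A = P.f i
  /-- the base change `A ⊗_{A_λ} B_λ` is isomorphic to `B` as an `A`-algebra -/
  iso : (A ⊗[P.C i] B') ≃ₐ[A] B


/-- Any finite set of elements of the colimit comes from some finite stage. -/
lemma FilteredRingColimitPresentation.exists_stage {A : Type u} [CommRing A]
    (P : FilteredRingColimitPresentation A) (s : Finset A) :
    ∃ i, ∀ a ∈ s, ∃ c, P.f i c = a := by
  classical
  choose idx c hc using P.jointly_surjective
  obtain ⟨j, hj⟩ := (s.image idx).exists_le
  refine ⟨j, fun a ha => ⟨P.t (idx a) j (hj _ (Finset.mem_image_of_mem idx ha)) (c a), ?_⟩⟩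
  rw [← RingHom.comp_apply, P.f_comp, hc]

/-- A multivariate polynomial whose coefficients lift along a ring hom lifts itself. -/
lemma MvPolynomial.exists_map_eq {R A : Type u} [CommRing R] [CommRing A] (f : R →+* A)
    {n : ℕ} (p : MvPolynomial (Fin n) A)
    (h : ∀ m ∈ p.support, ∃ c, f c = p.coeff m) :
    ∃ q : MvPolynomial (Fin n) R, MvPolynomial.map f q = p := by
  choose c hc using h
  refine ⟨∑ m ∈ p.support.attach, MvPolynomial.monomial m.1 (c m.1 m.2), ?_⟩
  rw [map_sum]
  simp only [MvPolynomial.map_monomial, hc]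
  rw [Finset.sum_attach p.support fun m => MvPolynomial.monomial m (p.coeff m)]
  exact MvPolynomial.support_sum_monomial_coeff p

/-- Let `(A_λ)` be a filtered direct system of commutative rings with
colimit `A` and let `B` be a finitely presented `A`-algebra.  Then there is an index `λ`
and a finitely presented `A_λ`-algebra `B_λ` with `A ⊗_{A_λ} B_λ ≅ B` as `A`-algebras. -/
theorem finitePresentation_descends_along_filtered_colimit
    (A : Type u) [CommRing A] (P : FilteredRingColimitPresentation A)
    (B : Type u) [CommRing B] [Algebra A B]
    (hB : Algebra.FinitePresentation A B) :
    Nonempty (BaseChangeDescent A P B) := by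
  classical
  obtain ⟨n, π, hπsurj, hπker⟩ := hB.out
  obtain ⟨t, ht⟩ := hπker
  -- find a stage containing all coefficients of all generators of the kernel
  obtain ⟨i, hi⟩ := P.exists_stage (t.biUnion fun p => p.support.image fun m => p.coeff m)
  have hlift : ∀ p ∈ t, ∃ q : MvPolynomial (Fin n) (P.C i), MvPolynomial.map (P.f i) q = p := by
    intro p hp
    refine MvPolynomial.exists_map_eq (P.f i) p fun m hm => hi _ ?_
    exact Finset.mem_biUnion.2 ⟨p, hp, Finset.mem_image_of_mem _ hm⟩
  choose q hq using hlift
  letI : Algebra (P.C i) A := (P.f i).toAlgebra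
  let G : Finset (MvPolynomial (Fin n) (P.C i)) := t.attach.image (fun p => q p.1 p.2)
  let I : Ideal (MvPolynomial (Fin n) (P.C i)) := Ideal.span (G : Set (MvPolynomial (Fin n) (P.C i)))
  haveI fp : Algebra.FinitePresentation (P.C i) (MvPolynomial (Fin n) (P.C i) ⧸ I) :=
    Algebra.FinitePresentation.quotient ⟨G, rfl⟩
  -- the image of the lifted generators recovers the original generators
  have himg : G.image (MvPolynomial.map (P.f i)) = t := by
    rw [Finset.image_image]
    have h1 : ((fun x => MvPolynomial.map (P.f i) x) ∘ fun p : {x // x ∈ t} => q p.1 p.2)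
        = fun p : {x // x ∈ t} => p.1 := by
      funext p
      exact hq p.1 p.2
    rw [h1, Finset.attach_image_val]
  have hmap : Ideal.map (MvPolynomial.map (P.f i) :
        MvPolynomial (Fin n) (P.C i) →+* MvPolynomial (Fin n) A) I
      = RingHom.ker π.toRingHom := by
    rw [show I = Ideal.span (G : Set (MvPolynomial (Fin n) (P.C i))) from rfl,
      Ideal.map_span, ← Finset.coe_image, himg, ht]
  -- set up the maps
  let e1 : (A ⊗[P.C i] MvPolynomial (Fin n) (P.C i)) ≃ₐ[A] MvPolynomial (Fin n) A :=
    MvPolynomial.algebraTensorAlgEquiv (P.C i) A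
  let g : MvPolynomial (Fin n) (P.C i) →ₐ[P.C i] (MvPolynomial (Fin n) (P.C i) ⧸ I) :=
    Ideal.Quotient.mkₐ (P.C i) I
  let m : (A ⊗[P.C i] MvPolynomial (Fin n) (P.C i))
      →ₐ[A] (A ⊗[P.C i] (MvPolynomial (Fin n) (P.C i) ⧸ I)) :=
    Algebra.TensorProduct.map (AlgHom.id A A) g
  have hm_surj : Function.Surjective m := by
    intro x
    induction x using TensorProduct.induction_on with
    | zero => exact ⟨0, map_zero _⟩
    | tmul a b =>
      obtain ⟨s, rfl⟩ := Ideal.Quotient.mkₐ_surjective (P.C i) I b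
      exact ⟨a ⊗ₜ s, by simp [m, g]⟩
    | add x y hx hy =>
      obtain ⟨x', rfl⟩ := hx
      obtain ⟨y', rfl⟩ := hy
      exact ⟨x' + y', map_add _ _ _⟩
  have hkerm : RingHom.ker m = Ideal.map
      (Algebra.TensorProduct.includeRight :
        MvPolynomial (Fin n) (P.C i) →ₐ[P.C i] A ⊗[P.C i] MvPolynomial (Fin n) (P.C i)) I := by
    have h0 := Algebra.TensorProduct.lTensor_ker (A := A) g (Ideal.Quotient.mkₐ_surjective (P.C i) I)
    have hkg : RingHom.ker g = I := Ideal.Quotient.mkₐ_ker (P.C i) I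
    rw [hkg] at h0
    rw [← h0]
    rfl
  let α : (A ⊗[P.C i] MvPolynomial (Fin n) (P.C i)) →ₐ[A] B := π.comp e1.toAlgHom
  have hα_surj : Function.Surjective α := hπsurj.comp e1.surjective
  have hcomp : ((e1 : (A ⊗[P.C i] MvPolynomial (Fin n) (P.C i)) →+* MvPolynomial (Fin n) A).comp
      ((Algebra.TensorProduct.includeRight :
        MvPolynomial (Fin n) (P.C i) →ₐ[P.C i] A ⊗[P.C i] MvPolynomial (Fin n) (P.C i)) :
        MvPolynomial (Fin n) (P.C i) →+* A ⊗[P.C i] MvPolynomial (Fin n) (P.C i)))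
      = (MvPolynomial.map (P.f i) :
        MvPolynomial (Fin n) (P.C i) →+* MvPolynomial (Fin n) A) :=
    RingHom.ext fun s => by
      show e1 ((1 : A) ⊗ₜ s) = MvPolynomial.map (P.f i) s
      rw [show e1 ((1 : A) ⊗ₜ s)
          = (1 : A) • MvPolynomial.map (algebraMap (P.C i) A) s from
        MvPolynomial.algebraTensorAlgEquiv_tmul (P.C i) A 1 s, one_smul]
      rfl
  have hkerα : RingHom.ker α = RingHom.ker m := by
    have h1 : RingHom.ker α = Ideal.comap
        (e1 : (A ⊗[P.C i] MvPolynomial (Fin n) (P.C i)) →+* MvPolynomial (Fin n) A)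
        (RingHom.ker π.toRingHom) := by
      rw [RingHom.comap_ker]
      rfl
    rw [h1, ← hmap, ← hcomp, hkerm, ← Ideal.map_map]
    exact Ideal.comap_map_of_bijective _ e1.bijective
  refine ⟨⟨i, MvPolynomial (Fin n) (P.C i) ⧸ I, fp, rfl, ?_⟩⟩
  exact ((Ideal.quotientKerAlgEquivOfSurjective hm_surj).symm.trans
    (Ideal.quotientEquivAlgOfEq A hkerα.symm)).trans
    (Ideal.quotientKerAlgEquivOfSurjective hα_surj)
end
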